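/- arXiv:2106.14770 — 2 statements merged into one kernel-verified Lean document; each statement's English description precedes it below -/
import Mathlib

section
/- For all positive integers m and N, the sum over i from 1 to N of (-1)^(m(i-1)) / (L_{m(i-1)} * L_{m(i+1)}) equals (1/(2 * F_{2m})) * (F_{m(N+1)}/L_{m(N+1)} + F_{mN}/L_{mN} - F_m/L_m). -/
/-!
With `L_n = 2 F_{n+1} - F_n`, d'Ocagne's identity `F_{j+k} F_{j+1} - F_j F_{j+k+1} = (-1)^j F_k`
becomes `F_{j+k} L_j - F_j L_{j+k} = 2 (-1)^j F_k`. Dividing by `2 F_k L_j L_{j+k}` with `k = 2m`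
shows that the `i`-th summand is `(g (i+1) - g (i-1)) / (2 F_{2m})` for `g n = F_{mn} / L_{mn}`,
so the sum telescopes with step two, leaving `g (N+1) + g N - g 1 - g 0`, and `g 0 = 0`.
-/

def lucas : ℕ → ℕ
  | 0 => 2
  | 1 => 1
  | n + 2 => lucas (n + 1) + lucas n

lemma lucas_pos : ∀ n, 0 < lucas n
  | 0 => by simp [lucas]
  | 1 => by simp [lucas]
  | n + 2 => by
    have := lucas_pos n
    simp only [lucas]
    omega

section CommRing

variable {R : Type*} [CommRing R]

lemma lucas_eq_two_mul_fib_succ_sub_fib : ∀ n, (lucas n : R) = 2 * Nat.fib (n + 1) - Nat.fib n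
  | 0 => by simp [lucas]
  | 1 => by simp [lucas]; norm_num
  | n + 2 => by
    rw [lucas, Nat.cast_add, lucas_eq_two_mul_fib_succ_sub_fib (n + 1),
      lucas_eq_two_mul_fib_succ_sub_fib n, Nat.fib_add_two (n := n + 1), Nat.fib_add_two (n := n)]
    push_cast
    ring

/-- d'Ocagne's identity. -/
lemma fib_add_mul_fib_succ_sub_fib_mul_fib_add_succ (k : ℕ) : ∀ j,
    (Nat.fib (j + k) : R) * Nat.fib (j + 1) - Nat.fib j * Nat.fib (j + k + 1)
      = (-1) ^ j * Nat.fib k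
  | 0 => by simp
  | j + 1 => by
    have ih := fib_add_mul_fib_succ_sub_fib_mul_fib_add_succ k j
    rw [show j + 1 + k + 1 = j + k + 2 by ring, show j + 1 + k = j + k + 1 by ring,
      Nat.fib_add_two (n := j + k), Nat.fib_add_two (n := j)]
    push_cast
    linear_combination -ih

lemma fib_add_mul_lucas_sub_fib_mul_lucas_add (j k : ℕ) :
    (Nat.fib (j + k) : R) * lucas j - Nat.fib j * lucas (j + k) = 2 * (-1) ^ j * Nat.fib k := by
  rw [lucas_eq_two_mul_fib_succ_sub_fib, lucas_eq_two_mul_fib_succ_sub_fib]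
  linear_combination 2 * fib_add_mul_fib_succ_sub_fib_mul_fib_add_succ (R := R) k j

end CommRing

lemma neg_one_pow_div_lucas_mul_lucas_add (j : ℕ) {k : ℕ} (hk : k ≠ 0) :
    (-1 : ℚ) ^ j / (lucas j * lucas (j + k))
      = 1 / (2 * Nat.fib k) * (Nat.fib (j + k) / lucas (j + k) - Nat.fib j / lucas j) := by
  have hj : (lucas j : ℚ) ≠ 0 := by have := lucas_pos j; positivity
  have hjk : (lucas (j + k) : ℚ) ≠ 0 := by have := lucas_pos (j + k); positivity
  have hFk : (Nat.fib k : ℚ) ≠ 0 := by simpa using hk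
  field_simp
  linear_combination -fib_add_mul_lucas_sub_fib_mul_lucas_add (R := ℚ) j k

lemma Finset.sum_Icc_sub_two {M : Type*} [AddCommGroup M] (g : ℕ → M) (N : ℕ) :
    ∑ i ∈ Finset.Icc 1 N, (g (i + 1) - g (i - 1)) = g (N + 1) + g N - g 1 - g 0 := by
  induction N with
  | zero => simp
  | succ N ih =>
    rw [Finset.sum_Icc_succ_top (by omega), ih, Nat.add_sub_cancel]
    abel

theorem stmt_5_general (m N : ℕ) (hm : 0 < m) :
    ∑ i ∈ Finset.Icc 1 N,
      ((-1 : ℚ) ^ (m * (i - 1)) /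
        ((lucas (m * (i - 1)) : ℚ) * (lucas (m * (i + 1)) : ℚ)))
    = (1 / (2 * (Nat.fib (2 * m) : ℚ))) *
        ((Nat.fib (m * (N + 1)) : ℚ) / (lucas (m * (N + 1)) : ℚ)
          + (Nat.fib (m * N) : ℚ) / (lucas (m * N) : ℚ)
          - (Nat.fib m : ℚ) / (lucas m : ℚ)) := by
  set g : ℕ → ℚ := fun n => Nat.fib (m * n) / lucas (m * n)
  calc _ = ∑ i ∈ Finset.Icc 1 N, 1 / (2 * (Nat.fib (2 * m) : ℚ)) * (g (i + 1) - g (i - 1)) := by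
        refine Finset.sum_congr rfl fun i hi => ?_
        have hstep : m * (i + 1) = m * (i - 1) + 2 * m := by
          obtain ⟨i, rfl⟩ := Nat.exists_eq_add_of_le' (Finset.mem_Icc.1 hi).1
          simp only [Nat.add_sub_cancel]
          ring
        rw [hstep, neg_one_pow_div_lucas_mul_lucas_add _ (by omega)]
        simp only [g, hstep]
    _ = _ := by
        rw [← Finset.mul_sum, Finset.sum_Icc_sub_two]
        simp [g]

theorem stmt_5 (m N : ℕ) (hm : 0 < m) (hN : 0 < N) :
    ∑ i ∈ Finset.Icc 1 N,
      ((-1 : ℚ) ^ (m * (i - 1)) /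
        ((lucas (m * (i - 1)) : ℚ) * (lucas (m * (i + 1)) : ℚ)))
    = (1 / (2 * (Nat.fib (2 * m) : ℚ))) *
        ((Nat.fib (m * (N + 1)) : ℚ) / (lucas (m * (N + 1)) : ℚ)
          + (Nat.fib (m * N) : ℚ) / (lucas (m * N) : ℚ)
          - (Nat.fib m : ℚ) / (lucas m : ℚ)) :=
  stmt_5_general m N hm
end

section
/- For all positive integers m and n, the infinite series sum over i >= 1 of 1/(L_{m(2i-1)+n} * L_{m(2i+1)+n}) converges to ((-1)^m / (5 * F_n * F_{2m})) * (L_m/L_{m+n} - 1/Φ^n), where Φ = (1+√5)/2. -/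
/-! By Binet's formulas, `F_{a+k} L_a - F_a L_{a+k} = 2 (-1)^a F_k`, so `1 / (L_a L_{a+k})` is
`(-1)^a / (2 F_k)` times the increment of `F / L` from `a` to `a + k`. Along the indices
`m (2i+1) + n`, which advance by `2m`, the sign `(-1)^a` is constant and the series
telescopes; as `F_k / L_k → 1/√5`, its sum is
`(-1)^(m+n) / (2 F_{2m}) · (1/√5 - F_{m+n} / L_{m+n})`, which Binet's
formulas turn into the stated closed form. -/

open Real Filter Topology
open scoped goldenRatio

lemma lucas_pos_s10 (k : ℕ) : 0 < lucas k := by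
  induction k using Nat.twoStepInduction with
  | zero => decide
  | one => decide
  | more k ih _ => simp only [lucas]; omega

lemma coe_lucas_ne_zero (k : ℕ) : (lucas k : ℝ) ≠ 0 := by
  exact_mod_cast (lucas_pos_s10 k).ne'

lemma coe_lucas_eq (k : ℕ) : (lucas k : ℝ) = φ ^ k + ψ ^ k := by
  induction k using Nat.twoStepInduction with
  | zero => norm_num [lucas]
  | one => simp [lucas, goldenRatio_add_goldenConj]
  | more k ih ih' =>
    simp only [lucas, Nat.cast_add, ih, ih']
    linear_combination (-φ ^ k) * goldenRatio_sq - ψ ^ k * goldenConj_sq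

lemma goldenRatio_pow_mul_goldenConj_pow (k : ℕ) : φ ^ k * ψ ^ k = (-1) ^ k := by
  rw [← mul_pow, goldenRatio_mul_goldenConj]

lemma sqrt_five_mul_fib_add_two_mul_goldenConj_pow (k : ℕ) :
    √5 * Nat.fib k + 2 * ψ ^ k = lucas k := by
  rw [coe_fib_eq, coe_lucas_eq, mul_div_cancel₀ _ (by positivity)]
  ring

lemma fib_add_mul_lucas_sub (a k : ℕ) :
    (Nat.fib (a + k) : ℝ) * lucas a - Nat.fib a * lucas (a + k) = 2 * (-1) ^ a * Nat.fib k := by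
  simp only [coe_fib_eq, coe_lucas_eq, pow_add, ← goldenRatio_pow_mul_goldenConj_pow]
  ring

noncomputable def fibDivLucas (k : ℕ) : ℝ := Nat.fib k / lucas k

lemma one_div_lucas_mul_lucas_add (a k : ℕ) (hk : 0 < k) :
    1 / ((lucas a : ℝ) * lucas (a + k)) =
      (-1) ^ a / (2 * Nat.fib k) * (fibDivLucas (a + k) - fibDivLucas a) := by
  have hF : (Nat.fib k : ℝ) ≠ 0 := by exact_mod_cast (Nat.fib_pos.mpr hk).ne'
  have hsq : ((-1 : ℝ) ^ a) ^ 2 = 1 := by rw [← pow_mul, pow_mul']; norm_num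
  have hLa := coe_lucas_ne_zero a
  have hLak := coe_lucas_ne_zero (a + k)
  rw [fibDivLucas, fibDivLucas]
  field_simp
  linear_combination (-(-1 : ℝ) ^ a) * fib_add_mul_lucas_sub a k - 2 * (Nat.fib k : ℝ) * hsq

lemma inv_sqrt_five_sub_fibDivLucas (k : ℕ) :
    1 / √5 - fibDivLucas k = 2 * ψ ^ k / (√5 * lucas k) := by
  have hL := coe_lucas_ne_zero k
  rw [fibDivLucas]
  field_simp
  linear_combination -sqrt_five_mul_fib_add_two_mul_goldenConj_pow k

lemma abs_goldenConj_lt_one : |ψ| < 1 :=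
  abs_lt.mpr ⟨neg_one_lt_goldenConj, goldenConj_neg.trans one_pos⟩

lemma tendsto_fibDivLucas : Tendsto fibDivLucas atTop (𝓝 (1 / √5)) := by
  have hψ : Tendsto (fun k : ℕ => ψ ^ k / lucas k) atTop (𝓝 0) := by
    refine squeeze_zero_norm (fun k => ?_)
      (tendsto_pow_atTop_nhds_zero_of_lt_one (abs_nonneg ψ) abs_goldenConj_lt_one)
    rw [Real.norm_eq_abs, abs_div, Nat.abs_cast, ← abs_pow]
    exact div_le_self (abs_nonneg _) (by exact_mod_cast lucas_pos_s10 k)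
  have h := (hψ.const_mul (2 / √5)).const_sub (1 / √5)
  rw [mul_zero, sub_zero] at h
  refine h.congr fun k => ?_
  linear_combination inv_sqrt_five_sub_fibDivLucas k

lemma hasSum_sub_of_telescoping {u g : ℕ → ℝ} {l : ℝ} (hu₀ : ∀ i, 0 ≤ u i)
    (hu : ∀ i, u i = g (i + 1) - g i) (hg : Tendsto g atTop (𝓝 l)) : HasSum u (l - g 0) := by
  rw [hasSum_iff_tendsto_nat_of_nonneg hu₀]
  simp_rw [hu, Finset.sum_range_sub]
  exact hg.sub_const _

lemma hasSum_one_div_lucas_mul_lucas (a k : ℕ) (hk : 0 < k) :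
    HasSum (fun i : ℕ => 1 / ((lucas (a + 2 * k * i) : ℝ) * lucas (a + 2 * k * (i + 1))))
      ((-1) ^ a / (2 * Nat.fib (2 * k)) * (1 / √5 - fibDivLucas a)) := by
  set c : ℝ := (-1) ^ a / (2 * Nat.fib (2 * k))
  have hterm (i : ℕ) : 1 / ((lucas (a + 2 * k * i) : ℝ) * lucas (a + 2 * k * (i + 1))) =
      c * fibDivLucas (a + 2 * k * (i + 1)) - c * fibDivLucas (a + 2 * k * i) := by
    rw [← mul_sub, mul_add, mul_one, ← add_assoc, one_div_lucas_mul_lucas_add _ _ (by omega),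
      pow_add, ((even_two_mul k).mul_right i).neg_one_pow, mul_one]
  have hindex : Tendsto (fun i : ℕ => a + 2 * k * i) atTop atTop :=
    tendsto_atTop_mono (fun i => le_add_left (Nat.le_mul_of_pos_left i (by omega))) tendsto_id
  have h := hasSum_sub_of_telescoping (fun i => by positivity) hterm
    ((tendsto_fibDivLucas.comp hindex).const_mul c)
  rwa [Function.comp_apply, mul_zero, add_zero, ← mul_sub] at h

lemma lucas_sub_lucas_add_div_goldenRatio_pow (m n : ℕ) :
    (lucas m : ℝ) - lucas (m + n) / φ ^ n = (-1) ^ n * √5 * Nat.fib n * ψ ^ (m + n) := by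
  have hsq : ((-1 : ℝ) ^ n) ^ 2 = 1 := by rw [← pow_mul, pow_mul']; norm_num
  rw [coe_lucas_eq, coe_lucas_eq, coe_fib_eq]
  field_simp [goldenRatio_ne_zero]
  linear_combination
    -(ψ ^ m * (φ ^ n - ψ ^ n)) * ((-1) ^ n * goldenRatio_pow_mul_goldenConj_pow n + hsq)

lemma lucas_series_closed_form_eq (m n : ℕ) (hm : 0 < m) (hn : 0 < n) :
    (-1) ^ m / (5 * Nat.fib n * Nat.fib (2 * m)) * ((lucas m : ℝ) / lucas (m + n) - 1 / φ ^ n) =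
      (-1) ^ (m + n) / (2 * Nat.fib (2 * m)) * (1 / √5 - fibDivLucas (m + n)) := by
  have hFn : (Nat.fib n : ℝ) ≠ 0 := by exact_mod_cast (Nat.fib_pos.mpr hn).ne'
  have hF2m : (Nat.fib (2 * m) : ℝ) ≠ 0 := by exact_mod_cast (Nat.fib_pos.mpr (by omega)).ne'
  have hL := coe_lucas_ne_zero (m + n)
  have h : (lucas m : ℝ) / lucas (m + n) - 1 / φ ^ n =
      ((lucas m : ℝ) - lucas (m + n) / φ ^ n) / lucas (m + n) := by
    field_simp
  rw [h, lucas_sub_lucas_add_div_goldenRatio_pow, inv_sqrt_five_sub_fibDivLucas]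
  field_simp
  rw [sq_sqrt (by norm_num)]
  ring

theorem stmt_10 (m n : ℕ) (hm : 0 < m) (hn : 0 < n) :
    HasSum (fun i : ℕ =>
      1 / ((lucas (m * (2 * i + 1) + n) : ℝ) * (lucas (m * (2 * i + 3) + n) : ℝ)))
      (((-1 : ℝ) ^ m / (5 * (Nat.fib n : ℝ) * (Nat.fib (2 * m) : ℝ))) *
        ((lucas m : ℝ) / (lucas (m + n) : ℝ) - 1 / ((1 + Real.sqrt 5) / 2) ^ n)) := by
  have hodd (i : ℕ) : m * (2 * i + 1) + n = m + n + 2 * m * i := by ring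
  have hodd' (i : ℕ) : m * (2 * i + 3) + n = m + n + 2 * m * (i + 1) := by ring
  simp only [hodd, hodd']
  rw [lucas_series_closed_form_eq m n hm hn]
  exact hasSum_one_div_lucas_mul_lucas (m + n) m hm
end
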